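/- arXiv:1111.1837 — 4 statements merged into one kernel-verified Lean document; each statement's English description precedes it below -/
import Mathlib

section
/- The set {g^i h^j | 0 ≤ i, j ≤ n−1} is a k-basis of the Taft algebra H_n(q); in particular, H_n(q) has dimension n² over k. -/
open scoped TensorProduct

/-- The defining relations of the Taft algebra: `g^n = 1`, `h^n = 0`, `hg = q·gh`,
where `g` (resp. `h`) is the free generator indexed by `true` (resp. `false`). -/
inductive TaftRel (k : Type) [Field k] (q : k) (n : ℕ) :
    FreeAlgebra k Bool → FreeAlgebra k Bool → Prop
  | g_pow : TaftRel k q n (FreeAlgebra.ι k true ^ n) 1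
  | h_pow : TaftRel k q n (FreeAlgebra.ι k false ^ n) 0
  | h_g : TaftRel k q n (FreeAlgebra.ι k false * FreeAlgebra.ι k true)
      (q • (FreeAlgebra.ι k true * FreeAlgebra.ι k false))

/-- The Taft algebra `H_n(q)`: the `k`-algebra generated by `g, h` subject to
`g^n = 1`, `h^n = 0`, `hg = q·gh`. -/
abbrev TaftAlgebra (k : Type) [Field k] (q : k) (n : ℕ) : Type :=
  RingQuot (TaftRel k q n)

/-- The generator `g` of the Taft algebra. -/
noncomputable def taftG (k : Type) [Field k] (q : k) (n : ℕ) : TaftAlgebra k q n :=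
  RingQuot.mkAlgHom k (TaftRel k q n) (FreeAlgebra.ι k true)

/-- The generator `h` of the Taft algebra. -/
noncomputable def taftH (k : Type) [Field k] (q : k) (n : ℕ) : TaftAlgebra k q n :=
  RingQuot.mkAlgHom k (TaftRel k q n) (FreeAlgebra.ι k false)

/-!
Spanning: the span of the `g^i h^j` with `0 ≤ i, j < n` contains `1` and is stable under left
multiplication by `g` and `h`, because `g^n = 1`, `h^n = 0` and `h g^i = q^i g^i h`; as `g, h`
generate the algebra, it is everything.

Independence: `H_n(q)` acts on `k^(n × n)` by letting `g` shift the first index cyclically and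
`h` send `e_{i,j}` to `q^i e_{i,j+1}` (to `0` when `j = n - 1`); the relations hold because
`q^n = 1`. Then `g^i h^j` sends `e_{0,0}` to `e_{i,j}`, so the `g^i h^j` are independent.
-/

theorem mul_pow_eq_smul_pow_mul {R A : Type*} [CommSemiring R] [Semiring A] [Algebra R A]
    {q : R} {g h : A} (hgh : h * g = q • (g * h)) (m : ℕ) :
    h * g ^ m = q ^ m • (g ^ m * h) := by
  induction m with
  | zero => simp
  | succ m ih =>
    rw [pow_succ, ← mul_assoc, ih, smul_mul_assoc, mul_assoc, hgh, mul_smul_comm, smul_smul,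
      ← mul_assoc, pow_succ]

theorem Submodule.span_eq_top_of_one_mem_of_mul_mem {R A : Type*} [CommSemiring R] [Semiring A]
    [Algebra R A] {s t : Set A} (hs : Algebra.adjoin R s = ⊤) (h1 : 1 ∈ span R t)
    (hmul : ∀ a ∈ s, ∀ x ∈ t, a * x ∈ span R t) : span R t = ⊤ := by
  have hstable : ∀ a ∈ Algebra.adjoin R s, ∀ y ∈ span R t, a * y ∈ span R t := by
    intro a ha
    induction ha using Algebra.adjoin_induction with
    | mem a ha =>
      intro y hy
      induction hy using span_induction with
      | mem x hx => exact hmul a ha x hx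
      | zero => simp
      | add x y _ _ hx hy => simpa [mul_add] using add_mem hx hy
      | smul r x _ hx => simpa using smul_mem _ r hx
    | algebraMap r =>
      exact fun y hy => by simpa [Algebra.algebraMap_eq_smul_one] using smul_mem _ r hy
    | add a b _ _ ha hb => exact fun y hy => by simpa [add_mul] using add_mem (ha y hy) (hb y hy)
    | mul a b _ _ ha hb => exact fun y hy => by simpa [mul_assoc] using ha _ (hb y hy)
  exact eq_top_iff'.2 fun a => by simpa using hstable a (hs ▸ Algebra.mem_top) 1 h1

namespace TaftAlgebra

variable {k : Type} [Field k] {q : k} {n : ℕ}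

theorem taftG_pow_eq_one : taftG k q n ^ n = 1 := by
  simpa [taftG] using RingQuot.mkAlgHom_rel k (TaftRel.g_pow (k := k) (q := q) (n := n))

theorem taftH_pow_eq_zero : taftH k q n ^ n = 0 := by
  simpa [taftH] using RingQuot.mkAlgHom_rel k (TaftRel.h_pow (k := k) (q := q) (n := n))

theorem taftH_mul_taftG : taftH k q n * taftG k q n = q • (taftG k q n * taftH k q n) := by
  simpa [taftG, taftH] using RingQuot.mkAlgHom_rel k (TaftRel.h_g (k := k) (q := q) (n := n))

theorem adjoin_taftG_taftH : Algebra.adjoin k {taftG k q n, taftH k q n} = ⊤ := by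
  have himage : RingQuot.mkAlgHom k (TaftRel k q n) '' Set.range (FreeAlgebra.ι k) =
      {taftG k q n, taftH k q n} := by
    ext x
    simp [taftG, taftH, eq_comm, or_comm]
  rw [← himage, Algebra.adjoin_image, FreeAlgebra.adjoin_range_ι, Algebra.map_top,
    AlgHom.range_eq_top]
  exact RingQuot.mkAlgHom_surjective k _

variable (k q n) in
noncomputable def monomial (p : Fin n × Fin n) : TaftAlgebra k q n :=
  taftG k q n ^ (p.1 : ℕ) * taftH k q n ^ (p.2 : ℕ)

theorem taftG_pow_mul_taftH_pow_mem_span [NeZero n] (a b : ℕ) :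
    taftG k q n ^ a * taftH k q n ^ b ∈ Submodule.span k (Set.range (monomial k q n)) := by
  by_cases hb : b < n
  · rw [pow_eq_pow_mod a taftG_pow_eq_one]
    exact Submodule.subset_span ⟨(⟨a % n, Nat.mod_lt a (NeZero.pos n)⟩, ⟨b, hb⟩), rfl⟩
  · rw [← Nat.add_sub_of_le (not_lt.1 hb), pow_add, taftH_pow_eq_zero, zero_mul, mul_zero]
    exact zero_mem _

theorem span_monomial [NeZero n] : Submodule.span k (Set.range (monomial k q n)) = ⊤ := by
  refine Submodule.span_eq_top_of_one_mem_of_mul_mem adjoin_taftG_taftH ?_ ?_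
  · simpa using taftG_pow_mul_taftH_pow_mem_span (k := k) (q := q) 0 0
  · rintro a (rfl | rfl) _ ⟨p, rfl⟩
    · simpa [monomial, ← mul_assoc, ← pow_succ'] using taftG_pow_mul_taftH_pow_mem_span _ _
    · rw [monomial, ← mul_assoc,
        mul_pow_eq_smul_pow_mul (taftH_mul_taftG (k := k) (q := q) (n := n)), smul_mul_assoc,
        mul_assoc, ← pow_succ']
      exact Submodule.smul_mem _ _ (taftG_pow_mul_taftH_pow_mem_span _ _)

section Representation

open Fin.NatCast

variable (k n) [NeZero n]

/-- Indices range over all of `ℕ`, the first one read mod `n` and vectors with `j ≥ n` being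
`0`, so that `repG` and `repH` act by plain index shifts. -/
noncomputable def basisVec (i j : ℕ) : (Fin n × Fin n) →₀ k :=
  if h : j < n then Finsupp.single ((i : Fin n), ⟨j, h⟩) 1 else 0

theorem single_eq_basisVec (p : Fin n × Fin n) :
    Finsupp.single p (1 : k) = basisVec k n p.1 p.2 := by
  simp [basisVec]

theorem basisVec_of_le {i j : ℕ} (h : n ≤ j) : basisVec k n i j = 0 :=
  dif_neg (not_lt.2 h)

theorem basisVec_add_self (i j : ℕ) : basisVec k n (i + n) j = basisVec k n i j := by
  simp [basisVec]

variable {k n} in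
theorem End.ext_basisVec {f f' : Module.End k ((Fin n × Fin n) →₀ k)}
    (h : ∀ i j : ℕ, f (basisVec k n i j) = f' (basisVec k n i j)) : f = f' :=
  Finsupp.basisSingleOne.ext fun p => by simpa [← single_eq_basisVec] using h p.1 p.2

noncomputable def repG : Module.End k ((Fin n × Fin n) →₀ k) :=
  Finsupp.linearCombination k fun p => basisVec k n (p.1 + 1) p.2

noncomputable def repH (q : k) : Module.End k ((Fin n × Fin n) →₀ k) :=
  Finsupp.linearCombination k fun p => q ^ (p.1 : ℕ) • basisVec k n p.1 (p.2 + 1)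

theorem repG_basisVec (i j : ℕ) : repG k n (basisVec k n i j) = basisVec k n (i + 1) j := by
  by_cases hj : j < n
  · simp [basisVec, hj, repG]
  · rw [basisVec_of_le k n (not_lt.1 hj), basisVec_of_le k n (not_lt.1 hj), map_zero]

theorem repH_basisVec (hq : q ^ n = 1) (i j : ℕ) :
    repH k n q (basisVec k n i j) = q ^ i • basisVec k n i (j + 1) := by
  by_cases hj : j < n
  · simp [basisVec, hj, repH, ← pow_eq_pow_mod i hq]
  · rw [basisVec_of_le k n (not_lt.1 hj), basisVec_of_le k n (by omega), map_zero, smul_zero]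

theorem repG_pow_basisVec (m i j : ℕ) :
    (repG k n ^ m) (basisVec k n i j) = basisVec k n (i + m) j := by
  induction m with
  | zero => rfl
  | succ m ih => rw [pow_succ', Module.End.mul_apply, ih, repG_basisVec, add_assoc]

theorem repH_pow_basisVec (hq : q ^ n = 1) (m i j : ℕ) :
    (repH k n q ^ m) (basisVec k n i j) = q ^ (i * m) • basisVec k n i (j + m) := by
  induction m with
  | zero => simp
  | succ m ih =>
    rw [pow_succ', Module.End.mul_apply, ih, map_smul, repH_basisVec k n hq, smul_smul,
      ← pow_add, mul_add_one, add_comm (i * m), add_assoc]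

theorem repG_pow_eq_one : repG k n ^ n = 1 :=
  End.ext_basisVec fun i j => by rw [repG_pow_basisVec, basisVec_add_self, Module.End.one_apply]

theorem repH_pow_eq_zero (hq : q ^ n = 1) : repH k n q ^ n = 0 :=
  End.ext_basisVec fun i j => by
    rw [repH_pow_basisVec k n hq, basisVec_of_le k n (by omega), smul_zero, LinearMap.zero_apply]

theorem repH_mul_repG (hq : q ^ n = 1) : repH k n q * repG k n = q • (repG k n * repH k n q) :=
  End.ext_basisVec fun i j => by
    simp only [Module.End.mul_apply, LinearMap.smul_apply, repG_basisVec, repH_basisVec k n hq,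
      map_smul, smul_smul, pow_succ']

variable {k n} in
noncomputable def rep (hq : q ^ n = 1) :
    TaftAlgebra k q n →ₐ[k] Module.End k ((Fin n × Fin n) →₀ k) :=
  RingQuot.liftAlgHom k ⟨FreeAlgebra.lift k fun b => if b then repG k n else repH k n q, by
    rintro _ _ ⟨⟩
    · simpa using repG_pow_eq_one k n
    · simpa using repH_pow_eq_zero k n hq
    · simpa using repH_mul_repG k n hq⟩

theorem rep_monomial_apply_basisVec_zero (hq : q ^ n = 1) (p : Fin n × Fin n) :
    rep hq (monomial k q n p) (basisVec k n 0 0) = Finsupp.single p 1 := by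
  have hG : rep hq (taftG k q n) = repG k n := by simp [rep, taftG]
  have hH : rep hq (taftH k q n) = repH k n q := by simp [rep, taftH]
  rw [monomial, map_mul, map_pow, map_pow, hG, hH, Module.End.mul_apply,
    repH_pow_basisVec k n hq, map_smul, repG_pow_basisVec, single_eq_basisVec]
  simp

end Representation

theorem linearIndependent_monomial [NeZero n] (hq : q ^ n = 1) :
    LinearIndependent k (monomial k q n) := by
  refine LinearIndependent.of_comp
    ((LinearMap.applyₗ (basisVec k n 0 0)).comp (rep hq).toLinearMap) ?_
  convert Finsupp.linearIndependent_single_one k (Fin n × Fin n) using 1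
  exact funext (rep_monomial_apply_basisVec_zero k n hq)

end TaftAlgebra

/-- The set `{g^i h^j | 0 ≤ i, j ≤ n−1}` is a `k`-basis of the Taft
algebra `H_n(q)`; in particular `H_n(q)` has dimension `n²` over `k`. -/
theorem taft_algebra_basis (k : Type) [Field k] (n : ℕ) (hn : 2 ≤ n) (q : k)
    (hq : IsPrimitiveRoot q n) :
    LinearIndependent k
      (fun p : Fin n × Fin n => taftG k q n ^ (p.1 : ℕ) * taftH k q n ^ (p.2 : ℕ)) ∧
    Submodule.span k
      (Set.range fun p : Fin n × Fin n => taftG k q n ^ (p.1 : ℕ) * taftH k q n ^ (p.2 : ℕ)) = ⊤ ∧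
    Module.finrank k (TaftAlgebra k q n) = n ^ 2 := by
  have : NeZero n := ⟨by omega⟩
  have hli := TaftAlgebra.linearIndependent_monomial (k := k) hq.pow_eq_one
  have hspan := TaftAlgebra.span_monomial (k := k) (q := q) (n := n)
  refine ⟨hli, hspan, ?_⟩
  rw [Module.finrank_eq_card_basis (Module.Basis.mk hli hspan.ge), Fintype.card_prod,
    Fintype.card_fin, sq]
end

section
/- For every 1 ≤ l ≤ n and i ∈ ℤ, the H_n(q)-module M(l,i) is indecomposable and uniserial (its submodules form a chain, namely 0 ⊂ span(v_l) ⊂ span(v_{l−1}, v_l) ⊂ … ⊂ M(l,i)). -/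
open scoped TensorProduct

/-!
`h` acts on the basis `v₀, …, v_{l-1}` as a single nilpotent Jordan block, so it suffices that
every `h`-invariant subspace `W` is spanned by a tail `v_j, …, v_{l-1}`. If `x ∈ W` has its first
nonzero coordinate at `j`, then `h x ∈ W` has its first nonzero coordinate at `j + 1` with the same
coefficient; by descending induction on `j` all later basis vectors lie in `W`, and subtracting
them from `x` leaves a nonzero multiple of `v_j`. Tails form a chain, and two comparable
complementary submodules cannot both be nonzero.
-/

namespace Module.Basis

variable {k V : Type*} [DivisionRing k] [AddCommGroup V] [Module k V] {l : ℕ}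
  (v : Basis (Fin l) k V)

def tailSpan (j : ℕ) : Submodule k V :=
  Submodule.span k (v '' {t | j ≤ (t : ℕ)})

theorem tailSpan_antitone : Antitone v.tailSpan :=
  fun _ _ hij => Submodule.span_mono <| Set.image_mono fun _ ht => le_trans hij ht

variable {v} {T : Module.End k V}
  (hT : ∀ j : Fin l, T (v j) = if h : (j : ℕ) + 1 < l then v ⟨j + 1, h⟩ else 0)
include hT

theorem repr_shift_succ (x : V) (j : Fin l) (h : (j : ℕ) + 1 < l) :
    v.repr (T x) ⟨j + 1, h⟩ = v.repr x j := by
  suffices v.coord ⟨j + 1, h⟩ ∘ₗ T = v.coord j from LinearMap.congr_fun this x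
  refine v.ext fun t => ?_
  by_cases ht : (t : ℕ) + 1 < l
  · simp [hT, ht, Finsupp.single_apply, Fin.ext_iff]
  · have : t ≠ j := by rintro rfl; exact ht h
    simp [hT, ht, this.symm]

theorem repr_shift_zero (x : V) (h : 0 < l) : v.repr (T x) ⟨0, h⟩ = 0 := by
  suffices v.coord ⟨0, h⟩ ∘ₗ T = 0 from LinearMap.congr_fun this x
  refine v.ext fun t => ?_
  by_cases ht : (t : ℕ) + 1 < l
  · simp [hT, ht, Fin.ext_iff]
  · simp [hT, ht]

variable {W : Submodule k V} (hW : W ∈ T.invtSubmodule)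
include hW

theorem basis_mem_of_le {j t : Fin l} (hj : v j ∈ W) (hjt : j ≤ t) : v t ∈ W := by
  rw [T.mem_invtSubmodule_iff_forall_mem_of_mem] at hW
  obtain ⟨d, hd⟩ : ∃ d, (t : ℕ) = j + d := ⟨t - j, by omega⟩
  induction d generalizing t with
  | zero => rwa [show t = j from Fin.ext hd]
  | succ d ih =>
    have hlt : (j : ℕ) + d + 1 < l := by omega
    have := hW _ (ih (t := ⟨j + d, by omega⟩) (Fin.mk_le_mk.2 (by omega)) rfl)
    rwa [hT, dif_pos hlt, show (⟨j + d + 1, hlt⟩ : Fin l) = t from Fin.ext hd.symm] at this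

theorem basis_mem_of_first_repr_ne_zero {x : V} (hx : x ∈ W) {j : Fin l}
    (hxj : v.repr x j ≠ 0) (hlt : ∀ t < j, v.repr x t = 0) : v j ∈ W := by
  have hlater : ∀ t : Fin l, j < t → v t ∈ W := by
    intro t hjt
    have hj1 : (j : ℕ) + 1 < l := by omega
    refine basis_mem_of_le hT hW (j := ⟨j + 1, hj1⟩) ?_ hjt
    refine basis_mem_of_first_repr_ne_zero (x := T x)
      ((T.mem_invtSubmodule_iff_forall_mem_of_mem.1 hW) x hx)
      (by rwa [repr_shift_succ hT]) fun s hs => ?_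
    obtain ⟨_ | s, hsl⟩ := s
    · exact repr_shift_zero hT x hsl
    · rw [repr_shift_succ hT x ⟨s, by omega⟩ hsl]
      exact hlt _ (by simp only [Fin.lt_def] at hs ⊢; omega)
  have hrest : x - v.repr x j • v j ∈ Submodule.span k (v '' {t | j < t}) := by
    refine v.mem_span_image.2 fun t ht => ?_
    rw [Finset.mem_coe, Finsupp.mem_support_iff] at ht
    rcases lt_trichotomy t j with htj | rfl | htj
    · simp [hlt t htj, htj.ne'] at ht
    · simp at ht
    · exact htj
  have hspan : Submodule.span k (v '' {t | j < t}) ≤ W :=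
    Submodule.span_le.2 <| Set.image_subset_iff.2 hlater
  have := W.smul_mem (v.repr x j)⁻¹ (by simpa using W.sub_mem hx (hspan hrest))
  rwa [smul_smul, inv_mul_cancel₀ hxj, one_smul] at this
termination_by l - j

theorem exists_eq_tailSpan : ∃ j ≤ l, W = v.tailSpan j := by
  classical
  have hP : ∃ j : ℕ, ∀ t : Fin l, j ≤ t → v t ∈ W := ⟨l, fun t ht => absurd t.isLt (by omega)⟩
  refine ⟨Nat.find hP, Nat.find_min' hP fun t ht => absurd t.isLt (by omega), le_antisymm ?_ ?_⟩
  · intro x hx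
    refine (v.mem_span_image).2 fun t ht => ?_
    obtain ⟨s, hs, hsmin⟩ := (v.repr x).support.exists_min_image id ⟨t, ht⟩
    have hvs : v s ∈ W := basis_mem_of_first_repr_ne_zero hT hW hx (Finsupp.mem_support_iff.1 hs)
      fun r hr => by_contra fun hr0 => (hr.trans_le (hsmin r (Finsupp.mem_support_iff.2 hr0))).false
    exact (Nat.find_min' hP fun r hr => basis_mem_of_le hT hW hvs (Fin.le_iff_val_le_val.2 hr)).trans
      (hsmin t ht)
  · exact Submodule.span_le.2 fun _ ⟨t, ht, hvt⟩ => hvt ▸ Nat.find_spec hP t ht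

end Module.Basis

theorem taft_M_indecomposable_uniserial_general (k : Type) [Field k] (n : ℕ) (q : k)
    (l : ℕ) (hl1 : 1 ≤ l)
    (V : Type) [AddCommGroup V] [Module k V] [Module (TaftAlgebra k q n) V]
    [IsScalarTower k (TaftAlgebra k q n) V]
    (v : Module.Basis (Fin l) k V)
    (hhv : ∀ j : Fin l, taftH k q n • v j =
      if h : (j : ℕ) + 1 < l then v ⟨(j : ℕ) + 1, h⟩ else 0) :
    -- `M(l,i)` is nonzero and indecomposable
    ((⊥ : Submodule (TaftAlgebra k q n) V) ≠ ⊤ ∧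
      ∀ W U : Submodule (TaftAlgebra k q n) V, IsCompl W U → W = ⊥ ∨ U = ⊥) ∧
    -- the submodules form a chain
    (∀ W U : Submodule (TaftAlgebra k q n) V, W ≤ U ∨ U ≤ W) ∧
    -- and every submodule is the span of the last `m` basis vectors, for some `m ≤ l`
    (∀ W : Submodule (TaftAlgebra k q n) V, ∃ m ≤ l,
      ((W : Submodule (TaftAlgebra k q n) V) : Set V)
        = ((Submodule.span k (v '' {j : Fin l | l - m ≤ (j : ℕ)}) : Submodule k V) : Set V)) := by
  have htail : ∀ W : Submodule (TaftAlgebra k q n) V, ∃ j ≤ l, W.restrictScalars k = v.tailSpan j :=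
    fun W => v.exists_eq_tailSpan (T := DistribSMul.toLinearMap k V (taftH k q n)) hhv <|
      (Module.End.mem_invtSubmodule_iff_forall_mem_of_mem _).2 fun x hx => W.smul_mem _ hx
  have hchain : ∀ W U : Submodule (TaftAlgebra k q n) V, W ≤ U ∨ U ≤ W := by
    intro W U
    obtain ⟨i, -, hW⟩ := htail W
    obtain ⟨j, -, hU⟩ := htail U
    rw [← Submodule.restrictScalars_le k, ← Submodule.restrictScalars_le k (s := U), hW, hU]
    exact (le_total j i).imp (v.tailSpan_antitone ·) (v.tailSpan_antitone ·)
  refine ⟨⟨?_, fun W U hWU => ?_⟩, hchain, fun W => ?_⟩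
  · exact fun hbot => v.ne_zero ⟨0, hl1⟩ <| (Submodule.mem_bot _).1 (hbot ▸ Submodule.mem_top)
  · exact (hchain W U).imp hWU.disjoint.eq_bot_of_le hWU.disjoint.symm.eq_bot_of_le
  · obtain ⟨j, hjl, hW⟩ := htail W
    refine ⟨l - j, Nat.sub_le l j, ?_⟩
    rw [Nat.sub_sub_self hjl]
    exact congrArg SetLike.coe hW

/-- For `1 ≤ l ≤ n` and `i ∈ ℤ`, the module `M(l,i)` is indecomposable
and uniserial: its submodules form a chain, namely
`0 ⊂ span(v_l) ⊂ span(v_{l−1}, v_l) ⊂ … ⊂ M(l,i)`. -/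
theorem taft_M_indecomposable_uniserial (k : Type) [Field k] (n : ℕ) (hn : 2 ≤ n) (q : k)
    (hq : IsPrimitiveRoot q n) (l : ℕ) (hl1 : 1 ≤ l) (hln : l ≤ n) (i : ℤ)
    (V : Type) [AddCommGroup V] [Module k V] [Module (TaftAlgebra k q n) V]
    [IsScalarTower k (TaftAlgebra k q n) V]
    (v : Module.Basis (Fin l) k V)
    (hgv : ∀ j : Fin l, taftG k q n • v j = q ^ (i - ((j : ℕ) : ℤ)) • v j)
    (hhv : ∀ j : Fin l, taftH k q n • v j =
      if h : (j : ℕ) + 1 < l then v ⟨(j : ℕ) + 1, h⟩ else 0) :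
    -- `M(l,i)` is nonzero and indecomposable
    ((⊥ : Submodule (TaftAlgebra k q n) V) ≠ ⊤ ∧
      ∀ W U : Submodule (TaftAlgebra k q n) V, IsCompl W U → W = ⊥ ∨ U = ⊥) ∧
    -- the submodules form a chain
    (∀ W U : Submodule (TaftAlgebra k q n) V, W ≤ U ∨ U ≤ W) ∧
    -- and every submodule is the span of the last `m` basis vectors, for some `m ≤ l`
    (∀ W : Submodule (TaftAlgebra k q n) V, ∃ m ≤ l,
      ((W : Submodule (TaftAlgebra k q n) V) : Set V)
        = ((Submodule.span k (v '' {j : Fin l | l - m ≤ (j : ℕ)}) : Submodule k V) : Set V)) :=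
  taft_M_indecomposable_uniserial_general k n q l hl1 V v hhv
end

section
/- For 1 ≤ l, l' ≤ n and integers i, i', the H_n(q)-modules M(l,i) and M(l',i') are isomorphic if and only if l = l' and i ≡ i' (mod n). -/
open scoped TensorProduct

/-- `V` is (a copy of) the standard `H_n(q)`-module `M(l,i)`:
it has a `k`-basis `v_0, …, v_{l-1}` with `g • v_j = q^{i-j} • v_j`,
`h • v_j = v_{j+1}` (and `h • v_{l-1} = 0`).  (This is the basis `v_1, …, v_l`
of the paper re-indexed from `0`.) -/
def StdMSpec (k : Type) [Field k] (q : k) (n : ℕ) (l : ℕ) (i : ℤ)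
    (V : Type) [AddCommGroup V] [Module k V] [Module (TaftAlgebra k q n) V] : Prop :=
  ∃ v : Module.Basis (Fin l) k V,
    (∀ j : Fin l, taftG k q n • v j = q ^ (i - ((j : ℕ) : ℤ)) • v j) ∧
    (∀ j : Fin l, taftH k q n • v j =
      if h : (j : ℕ) + 1 < l then v ⟨(j : ℕ) + 1, h⟩ else 0)

/-!
An isomorphism preserves the dimension, so `l = l'`, and it maps the kernel of `h` onto the
kernel of `h`. In `M(l, i)` that kernel is the line spanned by the last basis vector, on which
`g` acts by `q^(i-l+1)`; comparing the two scalars gives `q^(i-l+1) = q^(i'-l+1)`, i.e.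
`i ≡ i' (mod n)` because `q` is a primitive `n`-th root of unity. Conversely, when `i ≡ i'` the
two modules have the same structure constants, so matching the bases is a `k`-linear isomorphism
commuting with `g` and `h`, hence with the whole Taft algebra.
-/

namespace Module.Basis

variable {R M ι : Type*} [CommSemiring R] [AddCommMonoid M] [Module R M]

lemma repr_apply_of_apply_eq_smul (v : Basis ι R M) {T : M →ₗ[R] M} {d : ι → R}
    (hT : ∀ j, T (v j) = d j • v j) (x : M) (j : ι) :
    v.repr (T x) j = d j * v.repr x j := by
  classical
  have hcomp : v.coord j ∘ₗ T = d j • v.coord j := v.ext fun b => by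
    rcases eq_or_ne b j with rfl | hb
    · simp [hT]
    · simp [hT, hb]
  exact LinearMap.congr_fun hcomp x

lemma repr_succ_apply_of_apply_eq_shift {m : ℕ} (v : Basis (Fin (m + 1)) R M) {T : M →ₗ[R] M}
    (hT : ∀ j : Fin (m + 1),
      T (v j) = if h : (j : ℕ) + 1 < m + 1 then v ⟨(j : ℕ) + 1, h⟩ else 0)
    (x : M) (j : Fin m) : v.repr (T x) j.succ = v.repr x j.castSucc := by
  classical
  have hcomp : v.coord j.succ ∘ₗ T = v.coord j.castSucc := v.ext fun b => by
    rcases Fin.eq_castSucc_or_eq_last b with ⟨b, rfl⟩ | rfl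
    · rcases eq_or_ne b j with rfl | hb
      · simp [hT, Fin.succ]
      · simp [hT, Finsupp.single_apply, Fin.ext_iff]
    · simp [hT, Fin.ext_iff, j.isLt.ne']
  exact LinearMap.congr_fun hcomp x

end Module.Basis

lemma IsPrimitiveRoot.zpow_eq_zpow_iff_modEq {G₀ : Type*} [CommGroupWithZero G₀] {q : G₀}
    {n : ℕ} (hq : IsPrimitiveRoot q n) (hn : n ≠ 0) {a b : ℤ} :
    q ^ a = q ^ b ↔ a ≡ b [ZMOD n] := by
  have hq0 : q ≠ 0 := hq.ne_zero hn
  rw [Int.modEq_comm, Int.modEq_iff_dvd, ← hq.zpow_eq_one_iff_dvd, zpow_sub₀ hq0,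
    div_eq_one_iff_eq (zpow_ne_zero b hq0)]

section Taft

variable {k : Type} [Field k] {q : k} {n : ℕ}
  {V W : Type} [AddCommGroup V] [Module k V] [Module (TaftAlgebra k q n) V]
  [AddCommGroup W] [Module k W] [Module (TaftAlgebra k q n) W]

lemma TaftAlgebra.map_smul_of_commute_generators [IsScalarTower k (TaftAlgebra k q n) V]
    [IsScalarTower k (TaftAlgebra k q n) W] (f : V →ₗ[k] W)
    (hg : ∀ x, f (taftG k q n • x) = taftG k q n • f x)
    (hh : ∀ x, f (taftH k q n • x) = taftH k q n • f x)
    (a : TaftAlgebra k q n) (x : V) : f (a • x) = a • f x := by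
  obtain ⟨y, rfl⟩ := RingQuot.mkAlgHom_surjective k (TaftRel k q n) a
  induction y using FreeAlgebra.induction generalizing x with
  | grade0 r => rw [AlgHom.commutes, algebraMap_smul, map_smul, algebraMap_smul]
  | grade1 b => cases b <;> [exact hh x; exact hg x]
  | mul a b ha hb => rw [map_mul, mul_smul, mul_smul, ha, hb]
  | add a b ha hb => rw [map_add, add_smul, add_smul, map_add, ha, hb]

namespace StdMSpec

variable {l m : ℕ} {i i' : ℤ}

lemma finrank_eq (hV : StdMSpec k q n l i V) : Module.finrank k V = l := by
  obtain ⟨v, -, -⟩ := hV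
  rw [Module.finrank_eq_card_basis v, Fintype.card_fin]

lemma of_modEq (hq : IsPrimitiveRoot q n) (hn : n ≠ 0) (hi : i ≡ i' [ZMOD n])
    (hV : StdMSpec k q n l i V) : StdMSpec k q n l i' V := by
  obtain ⟨v, hvg, hvh⟩ := hV
  refine ⟨v, fun j => ?_, hvh⟩
  rw [hvg j, (hq.zpow_eq_zpow_iff_modEq hn).mpr (hi.sub_right _)]

lemma nonempty_linearEquiv [IsScalarTower k (TaftAlgebra k q n) V]
    [IsScalarTower k (TaftAlgebra k q n) W] (hV : StdMSpec k q n l i V)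
    (hW : StdMSpec k q n l i W) :
    Nonempty (V ≃ₗ[TaftAlgebra k q n] W) := by
  obtain ⟨v, hvg, hvh⟩ := hV
  obtain ⟨w, hwg, hwh⟩ := hW
  let e : V ≃ₗ[k] W := v.equiv w (Equiv.refl _)
  have he (j : Fin l) : e (v j) = w j := by simp [e]
  have hcomm (a : TaftAlgebra k q n) (hbasis : ∀ j, e (a • v j) = a • w j) (x : V) :
      e (a • x) = a • e x := by
    refine LinearMap.congr_fun (v.ext fun j => ?_ :
      e.toLinearMap ∘ₗ DistribSMul.toLinearMap k V a =
        DistribSMul.toLinearMap k W a ∘ₗ e.toLinearMap) x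
    simpa [he] using hbasis j
  have hg := hcomm (taftG k q n) fun j => by rw [hvg, map_smul, he, hwg]
  have hh := hcomm (taftH k q n) fun j => by
    rw [hvh, hwh]
    split_ifs <;> simp [he]
  exact ⟨{ e with map_smul' := TaftAlgebra.map_smul_of_commute_generators e.toLinearMap hg hh }⟩

lemma exists_ne_zero_taftH_smul_eq_zero (hV : StdMSpec k q n (m + 1) i V) :
    ∃ x : V, x ≠ 0 ∧ taftH k q n • x = 0 := by
  obtain ⟨v, -, hvh⟩ := hV
  exact ⟨v (Fin.last m), v.ne_zero _, by simp [hvh]⟩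

lemma taftG_smul_of_taftH_smul_eq_zero [IsScalarTower k (TaftAlgebra k q n) V]
    (hV : StdMSpec k q n (m + 1) i V) {x : V} (hx : taftH k q n • x = 0) :
    taftG k q n • x = q ^ (i - m) • x := by
  obtain ⟨v, hvg, hvh⟩ := hV
  have hG := v.repr_apply_of_apply_eq_smul (T := DistribSMul.toLinearMap k V (taftG k q n)) hvg
  have hH := v.repr_succ_apply_of_apply_eq_shift
    (T := DistribSMul.toLinearMap k V (taftH k q n)) hvh
  simp only [DistribSMul.toLinearMap_apply] at hG hH
  refine v.ext_elem fun j => ?_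
  rw [hG, map_smul, Finsupp.smul_apply, smul_eq_mul]
  rcases Fin.eq_castSucc_or_eq_last j with ⟨j, rfl⟩ | rfl
  · simp [← hH, hx]
  · simp

lemma zpow_eq_of_linearEquiv [IsScalarTower k (TaftAlgebra k q n) V]
    [IsScalarTower k (TaftAlgebra k q n) W] (hV : StdMSpec k q n (m + 1) i V)
    (hW : StdMSpec k q n (m + 1) i' W) (f : V ≃ₗ[TaftAlgebra k q n] W) :
    q ^ (i - m) = q ^ (i' - m) := by
  obtain ⟨x, hx0, hx⟩ := hV.exists_ne_zero_taftH_smul_eq_zero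
  have hfx0 : f x ≠ 0 := f.map_ne_zero_iff.mpr hx0
  have hfx : taftH k q n • f x = 0 := by rw [← map_smul, hx, map_zero]
  refine smul_left_injective k hfx0 ?_
  calc q ^ (i - m) • f x = f (taftG k q n • x) := by
        rw [hV.taftG_smul_of_taftH_smul_eq_zero hx]
        exact (f.toLinearMap.map_smul_of_tower _ x).symm
    _ = taftG k q n • f x := map_smul f _ x
    _ = q ^ (i' - m) • f x := hW.taftG_smul_of_taftH_smul_eq_zero hfx

end StdMSpec

end Taft

theorem taft_M_iso_iff_general (k : Type) [Field k] (n : ℕ) (hn : 2 ≤ n) (q : k)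
    (hq : IsPrimitiveRoot q n) (l l' : ℕ) (hl1 : 1 ≤ l) (i i' : ℤ)
    (V W : Type) [AddCommGroup V] [Module k V] [Module (TaftAlgebra k q n) V]
    [IsScalarTower k (TaftAlgebra k q n) V]
    [AddCommGroup W] [Module k W] [Module (TaftAlgebra k q n) W]
    [IsScalarTower k (TaftAlgebra k q n) W]
    (hV : StdMSpec k q n l i V) (hW : StdMSpec k q n l' i' W) :
    Nonempty (V ≃ₗ[TaftAlgebra k q n] W) ↔ (l = l' ∧ i ≡ i' [ZMOD n]) := by
  have hn0 : n ≠ 0 := by omega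
  constructor
  · rintro ⟨f⟩
    obtain rfl : l = l' :=
      hV.finrank_eq.symm.trans ((f.restrictScalars k).finrank_eq.trans hW.finrank_eq)
    obtain ⟨m, rfl⟩ := Nat.exists_eq_add_of_le' hl1
    have hmod := (hq.zpow_eq_zpow_iff_modEq hn0).mp (StdMSpec.zpow_eq_of_linearEquiv hV hW f)
    exact ⟨rfl, by simpa using hmod.add_right m⟩
  · rintro ⟨rfl, hi⟩
    exact hV.nonempty_linearEquiv (hW.of_modEq hq hn0 hi.symm)

/-- For `1 ≤ l, l' ≤ n` and integers `i, i'`, the `H_n(q)`-modules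
`M(l,i)` and `M(l',i')` are isomorphic if and only if `l = l'` and `i ≡ i' (mod n)`. -/
theorem taft_M_iso_iff (k : Type) [Field k] (n : ℕ) (hn : 2 ≤ n) (q : k)
    (hq : IsPrimitiveRoot q n) (l l' : ℕ) (hl1 : 1 ≤ l) (hln : l ≤ n)
    (hl'1 : 1 ≤ l') (hl'n : l' ≤ n) (i i' : ℤ)
    (V W : Type) [AddCommGroup V] [Module k V] [Module (TaftAlgebra k q n) V]
    [IsScalarTower k (TaftAlgebra k q n) V]
    [AddCommGroup W] [Module k W] [Module (TaftAlgebra k q n) W]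
    [IsScalarTower k (TaftAlgebra k q n) W]
    (hV : StdMSpec k q n l i V) (hW : StdMSpec k q n l' i' W) :
    Nonempty (V ≃ₗ[TaftAlgebra k q n] W) ↔ (l = l' ∧ i ≡ i' [ZMOD n]) :=
  taft_M_iso_iff_general k n hn q hq l l' hl1 i i' V W hV hW
end

section
/- Every finite-dimensional indecomposable H_n(q)-module is isomorphic to M(l,i) for a unique pair (l,i) with 1 ≤ l ≤ n and 0 ≤ i ≤ n−1; hence up to isomorphism there are exactly n² finite-dimensional indecomposable H_n(q)-modules. -/
open scoped TensorProduct

/-!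
Write `G` and `H` for the actions of `g` and `h`. Since `G ^ n = 1` and `n` is invertible in `k`,
every vector is a sum of `G`-eigenvectors, and `hg = q·gh` makes `H` map a `G`-eigenvector to a
`G`-eigenvector. Let `m` be the nilpotency index of `H`; pick a `G`-eigenvector `v` with
`H ^ (m - 1) v ≠ 0` and a `G`-eigenfunctional `φ` with `φ (H ^ (m - 1) v) ≠ 0`. The string
`v, H v, …, H ^ (m - 1) v` spans a submodule, and `{x | φ (H ^ j x) = 0 for all j < m}` is a
submodule complementary to it, because the pairing `φ (H ^ (j + t) v)` is anti-triangular with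
nonzero anti-diagonal. Indecomposability kills the complement, so the string is a basis of type
`M(m, d)`. Conversely `l` is the dimension, and `G` acts on the line `H ^ (l - 1) V` by
`q ^ (i - (l - 1))`, which pins down `i` modulo `n`.
-/

open Module Module.End Finset

section Eigenvectors

variable {k M N : Type*} [Field k] [AddCommGroup M] [Module k M] [AddCommGroup N] [Module k N]

theorem IsPrimitiveRoot.geom_sum_pow_eq_ite {ζ : k} {n : ℕ} (hζ : IsPrimitiveRoot ζ n)
    {j : ℕ} (hj : j < n) : ∑ d ∈ range n, (ζ ^ j) ^ d = if j = 0 then (n : k) else 0 := by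
  split_ifs with hj0
  · simp [hj0]
  · have hne : ζ ^ j ≠ 1 := hζ.pow_ne_one_of_pos_of_lt hj0 hj
    rw [geom_sum_eq hne, ← pow_mul, mul_comm, pow_mul, hζ.pow_eq_one, one_pow, sub_self,
      zero_div]

theorem exists_eigenvector_apply_ne_zero {ζ : k} {n : ℕ} [NeZero n] (hζ : IsPrimitiveRoot ζ n)
    {G : End k M} (hG : G ^ n = 1) (f : M →ₗ[k] N) {x : M} (hx : f x ≠ 0) :
    ∃ c : k, ∃ v : M, G v = c • v ∧ f v ≠ 0 := by
  -- `S d` maps into the `(ζ ^ d)⁻¹`-eigenspace of `G`, and the `S d` add up to `n • 1`.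
  set S : ℕ → End k M := fun d ↦ ∑ j ∈ range n, (ζ ^ d • G) ^ j
  have hS : ∀ d, (ζ ^ d • G) * S d = S d := by
    intro d
    have h := mul_neg_geom_sum (ζ ^ d • G) n
    rw [smul_pow, hG, ← pow_mul, mul_comm, pow_mul, hζ.pow_eq_one, one_pow, one_smul,
      sub_self, sub_mul, one_mul, sub_eq_zero] at h
    exact h.symm
  have hsum : ∑ d ∈ range n, S d = (n : k) • 1 := by
    calc ∑ d ∈ range n, S d
        = ∑ j ∈ range n, (∑ d ∈ range n, (ζ ^ j) ^ d) • G ^ j := by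
          rw [sum_comm]
          simp only [smul_pow, sum_smul, ← pow_mul, mul_comm]
      _ = (n : k) • 1 := by
          rw [sum_congr rfl fun j hj ↦ by rw [hζ.geom_sum_pow_eq_ite (mem_range.mp hj)]]
          simp [ite_smul, NeZero.pos n]
  have hfx : ∑ d ∈ range n, f (S d x) ≠ 0 := by
    rw [← map_sum, ← LinearMap.sum_apply, hsum]
    simpa [hζ.neZero'.out] using hx
  obtain ⟨d, -, hd⟩ := exists_ne_zero_of_sum_ne_zero hfx
  have hζd : ζ ^ d ≠ 0 := pow_ne_zero _ (hζ.ne_zero (NeZero.ne n))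
  exact ⟨(ζ ^ d)⁻¹, S d x, (eq_inv_smul_iff₀ hζd).mpr (LinearMap.congr_fun (hS d) x), hd⟩

theorem LinearMap.dualMap_pow (G : End k M) (t : ℕ) : G.dualMap ^ t = (G ^ t).dualMap := by
  induction t with
  | zero => rfl
  | succ t ih => rw [pow_succ', ih, pow_succ]; rfl

theorem exists_eigenvector_eigenfunctional {ζ : k} {n : ℕ} [NeZero n]
    (hζ : IsPrimitiveRoot ζ n) {G : End k M} (hG : G ^ n = 1) {f : End k M} (hf : f ≠ 0) :
    ∃ (c e : k) (v : M) (φ : Dual k M),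
      G v = c • v ∧ φ ∘ₗ G = e • φ ∧ φ (f v) ≠ 0 := by
  obtain ⟨w, hw⟩ := DFunLike.ne_iff.mp hf
  obtain ⟨c, v, hv, hfv⟩ := exists_eigenvector_apply_ne_zero hζ hG f hw
  obtain ⟨ψ, hψ⟩ : ∃ ψ : Dual k M, ψ (f v) ≠ 0 := by
    by_contra! h
    exact hfv ((forall_dual_apply_eq_zero_iff k _).mp h)
  obtain ⟨e, φ, hφ, hφv⟩ := exists_eigenvector_apply_ne_zero hζ (G := G.dualMap)
    (by rw [LinearMap.dualMap_pow, hG]; rfl) (Dual.eval k M (f v)) hψ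
  exact ⟨c, e, v, φ, hv, hφ, hφv⟩

theorem Module.End.pow_eq_one_of_apply_eq_smul {n : ℕ} {G : End k M} (hG : G ^ n = 1) {c : k}
    {v : M} (hv : G v = c • v) (hv0 : v ≠ 0) : c ^ n = 1 := by
  have h := HasEigenvector.pow_apply (hasEigenvector_iff.mpr ⟨mem_eigenspace_iff.mpr hv, hv0⟩) n
  rw [hG, one_apply] at h
  exact smul_left_injective k hv0 (by simpa using h.symm)

end Eigenvectors

theorem pow_mul_eq_smul_mul_pow {R A : Type*} [CommSemiring R] [Semiring A] [Algebra R A]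
    {q : R} {g h : A} (hhg : h * g = q • (g * h)) (t : ℕ) :
    h ^ t * g = q ^ t • (g * h ^ t) := by
  induction t with
  | zero => simp
  | succ t ih =>
    rw [pow_succ, mul_assoc, hhg, mul_smul_comm, ← mul_assoc, ih, smul_mul_assoc, smul_smul,
      mul_assoc, ← pow_succ, ← pow_succ']

theorem eq_zero_of_forall_sum_mul_add_eq_zero {R : Type*} [Semiring R] [NoZeroDivisors R] {m : ℕ}
    {a : ℕ → R} (ha : ∀ s, m ≤ s → a s = 0) (ham : a (m - 1) ≠ 0) {c : Fin m → R}
    (hc : ∀ j : Fin m, ∑ t, c t * a (j + t) = 0) : c = 0 := by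
  suffices h : ∀ N, ∀ t : Fin m, (t : ℕ) < N → c t = 0 from
    funext fun t ↦ h _ t t.val.lt_succ_self
  intro N
  induction N with
  | zero => simp
  | succ N ih =>
    intro t ht
    rcases Nat.lt_succ_iff_lt_or_eq.mp ht with ht | rfl
    · exact ih t ht
    -- In the equation for `j = m - 1 - t` only `c t` survives: earlier coefficients vanish by
    -- induction, and later terms have index at least `m`.
    have h := hc ⟨m - 1 - t, by omega⟩
    rw [sum_eq_single t] at h
    · rw [show m - 1 - (t : ℕ) + t = m - 1 by omega] at h
      exact (mul_eq_zero.mp h).resolve_right ham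
    · intro s _ hst
      rcases lt_or_gt_of_ne (Fin.val_ne_of_ne hst) with hlt | hgt
      · rw [ih s hlt, zero_mul]
      · rw [ha _ (by simp only; omega), mul_zero]
    · simp

theorem LinearMap.isCompl_range_ker_of_injective_comp {K V W : Type*} [DivisionRing K]
    [AddCommGroup V] [Module K V] [AddCommGroup W] [Module K W] [FiniteDimensional K W]
    (Ψ : W →ₗ[K] V) (Φ : V →ₗ[K] W) (h : Function.Injective (Φ ∘ₗ Ψ)) :
    IsCompl (LinearMap.range Ψ) (LinearMap.ker Φ) := by
  constructor
  · rw [Submodule.disjoint_def]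
    rintro _ ⟨w, rfl⟩ hw
    rw [h (by simpa using hw : Φ (Ψ w) = Φ (Ψ 0)), map_zero]
  · rw [codisjoint_iff, eq_top_iff]
    intro x _
    obtain ⟨w, hw⟩ := LinearMap.injective_iff_surjective.mp h (Φ x)
    refine Submodule.mem_sup.mpr ⟨Ψ w, ⟨w, rfl⟩, x - Ψ w, ?_, add_sub_cancel _ _⟩
    rw [LinearMap.mem_ker, map_sub, ← LinearMap.comp_apply, hw, sub_self]

section String

variable {k V : Type*} [Field k] [AddCommGroup V] [Module k V] {q : k} {G H : End k V} {m : ℕ}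

theorem apply_pow_apply_eq_div_smul (hHG : H * G = q • (G * H)) (hq : q ≠ 0) {c : k} {v : V}
    (hv : G v = c • v) (t : ℕ) : G ((H ^ t) v) = (c / q ^ t) • (H ^ t) v := by
  have h := LinearMap.congr_fun (pow_mul_eq_smul_mul_pow hHG t) v
  rw [mul_apply, hv, map_smul, LinearMap.smul_apply, mul_apply] at h
  rw [div_eq_inv_mul, mul_smul, h, inv_smul_smul₀ (pow_ne_zero t hq)]

theorem span_pow_apply_mem_invtSubmodule (hm : H ^ m = 0) (v : V) :
    Submodule.span k (Set.range fun t : Fin m ↦ (H ^ (t : ℕ)) v) ∈ H.invtSubmodule := by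
  rw [mem_invtSubmodule_iff_map_le, Submodule.map_span_le]
  rintro _ ⟨t, rfl⟩
  rw [← mul_apply, ← pow_succ']
  by_cases ht : (t : ℕ) + 1 < m
  · exact Submodule.subset_span ⟨⟨t + 1, ht⟩, rfl⟩
  · rw [pow_eq_zero_of_le (by omega) hm, LinearMap.zero_apply]
    exact Submodule.zero_mem _

theorem span_pow_apply_mem_invtSubmodule_of_apply_eq_smul (hHG : H * G = q • (G * H))
    (hq : q ≠ 0) {c : k} {v : V} (hv : G v = c • v) :
    Submodule.span k (Set.range fun t : Fin m ↦ (H ^ (t : ℕ)) v) ∈ G.invtSubmodule := by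
  rw [mem_invtSubmodule_iff_map_le, Submodule.map_span_le]
  rintro _ ⟨t, rfl⟩
  rw [apply_pow_apply_eq_div_smul hHG hq hv]
  exact Submodule.smul_mem _ _ (Submodule.subset_span ⟨t, rfl⟩)

def pairingPow (H : End k V) (φ : Dual k V) (m : ℕ) : V →ₗ[k] Fin m → k :=
  LinearMap.pi fun j : Fin m ↦ φ ∘ₗ H ^ (j : ℕ)

theorem mem_ker_pairingPow {φ : Dual k V} {x : V} :
    x ∈ LinearMap.ker (pairingPow H φ m) ↔ ∀ j : Fin m, φ ((H ^ (j : ℕ)) x) = 0 := by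
  simp [pairingPow, funext_iff]

theorem ker_pairingPow_mem_invtSubmodule (hm : H ^ m = 0) (φ : Dual k V) :
    LinearMap.ker (pairingPow H φ m) ∈ H.invtSubmodule := by
  intro x hx
  simp only [Submodule.mem_comap, mem_ker_pairingPow] at hx ⊢
  intro j
  rw [← mul_apply, ← pow_succ]
  by_cases hj : (j : ℕ) + 1 < m
  · exact hx ⟨j + 1, hj⟩
  · rw [pow_eq_zero_of_le (by omega) hm, LinearMap.zero_apply, map_zero]

theorem ker_pairingPow_mem_invtSubmodule_of_comp_eq_smul (hHG : H * G = q • (G * H)) {e : k}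
    {φ : Dual k V} (hφ : φ ∘ₗ G = e • φ) :
    LinearMap.ker (pairingPow H φ m) ∈ G.invtSubmodule := by
  intro x hx
  simp only [Submodule.mem_comap, mem_ker_pairingPow] at hx ⊢
  intro j
  rw [← mul_apply, pow_mul_eq_smul_mul_pow hHG, LinearMap.smul_apply, mul_apply, map_smul,
    ← LinearMap.comp_apply φ G, hφ, LinearMap.smul_apply, hx j, smul_zero, smul_zero]

theorem pairingPow_comp_linearCombination_injective (hm : H ^ m = 0) {φ : Dual k V} {v : V}
    (hv : φ ((H ^ (m - 1)) v) ≠ 0) :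
    Function.Injective
      (pairingPow H φ m ∘ₗ
        Fintype.linearCombination k fun t : Fin m ↦ (H ^ (t : ℕ)) v) := by
  rw [← LinearMap.ker_eq_bot, LinearMap.ker_eq_bot']
  intro c hc
  refine eq_zero_of_forall_sum_mul_add_eq_zero (a := fun s ↦ φ ((H ^ s) v))
    (fun s hs ↦ by simp [pow_eq_zero_of_le hs hm]) hv fun j ↦ ?_
  simpa [pairingPow, Fintype.linearCombination_apply, map_sum, pow_add, mul_apply] using
    congr_fun hc j

theorem linearIndependent_pow_apply (hm : H ^ m = 0) {φ : Dual k V} {v : V}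
    (hv : φ ((H ^ (m - 1)) v) ≠ 0) : LinearIndependent k fun t : Fin m ↦ (H ^ (t : ℕ)) v :=
  linearIndependent_iff_injective_fintypeLinearCombination.mpr
    (Function.Injective.of_comp (f := pairingPow H φ m)
      (pairingPow_comp_linearCombination_injective hm hv))

theorem isCompl_span_pow_apply_ker_pairingPow (hm : H ^ m = 0) {φ : Dual k V} {v : V}
    (hv : φ ((H ^ (m - 1)) v) ≠ 0) :
    IsCompl (Submodule.span k (Set.range fun t : Fin m ↦ (H ^ (t : ℕ)) v))
      (LinearMap.ker (pairingPow H φ m)) := by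
  rw [← Fintype.range_linearCombination]
  exact LinearMap.isCompl_range_ker_of_injective_comp _ _
    (pairingPow_comp_linearCombination_injective hm hv)

theorem exists_string_basis_of_indecomposable [FiniteDimensional k V] [Nontrivial V] {n : ℕ}
    (hq : IsPrimitiveRoot q n) (hG : G ^ n = 1) (hH : H ^ n = 0) (hHG : H * G = q • (G * H))
    (hind : ∀ U W : Submodule k V, U ∈ G.invtSubmodule → U ∈ H.invtSubmodule →
      W ∈ G.invtSubmodule → W ∈ H.invtSubmodule → IsCompl U W → U = ⊥ ∨ W = ⊥) :
    ∃ (m d : ℕ) (b : Basis (Fin m) k V), 1 ≤ m ∧ m ≤ n ∧ d < n ∧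
      (∀ j : Fin m, G (b j) = q ^ ((d : ℤ) - (j : ℕ)) • b j) ∧
      (∀ j : Fin m, H (b j) = if h : (j : ℕ) + 1 < m then b ⟨j + 1, h⟩ else 0) := by
  have hHnil : IsNilpotent H := ⟨n, hH⟩
  set m := nilpotencyClass H
  have hm : H ^ m = 0 := pow_nilpotencyClass hHnil
  have hm0 : 0 < m := pos_nilpotencyClass_iff.mpr hHnil
  have hmn : m ≤ n := Nat.sInf_le hH
  have : NeZero n := ⟨by omega⟩
  have hq0 : q ≠ 0 := hq.ne_zero (NeZero.ne n)
  obtain ⟨c, e, v, φ, hv, hφ, hφv⟩ :=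
    exists_eigenvector_eigenfunctional hq hG (pow_pred_nilpotencyClass hHnil)
  have hv0 : v ≠ 0 := fun h ↦ hφv (by rw [h, map_zero, map_zero])
  have hcompl := isCompl_span_pow_apply_ker_pairingPow hm hφv
  obtain hU | hW := hind _ _ (span_pow_apply_mem_invtSubmodule_of_apply_eq_smul hHG hq0 hv)
    (span_pow_apply_mem_invtSubmodule hm v)
    (ker_pairingPow_mem_invtSubmodule_of_comp_eq_smul hHG hφ)
    (ker_pairingPow_mem_invtSubmodule hm φ) hcompl
  · have hvU : v ∈ Submodule.span k (Set.range fun t : Fin m ↦ (H ^ (t : ℕ)) v) :=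
      Submodule.subset_span ⟨⟨0, hm0⟩, by simp⟩
    exact absurd (by simpa [hU] using hvU) hv0
  obtain ⟨d, hd, rfl⟩ := hq.eq_pow_of_pow_eq_one (pow_eq_one_of_apply_eq_smul hG hv hv0)
  refine ⟨m, d, Basis.mk (linearIndependent_pow_apply hm hφv)
    (eq_top_of_isCompl_bot (hW ▸ hcompl)).ge, hm0, hmn, hd, fun j ↦ ?_, fun j ↦ ?_⟩
  · rw [Basis.mk_apply, apply_pow_apply_eq_div_smul hHG hq0 hv, zpow_sub₀ hq0, zpow_natCast,
      zpow_natCast]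
  · rw [Basis.mk_apply, ← mul_apply, ← pow_succ']
    split_ifs with h
    · rw [Basis.mk_apply]
    · rw [pow_eq_zero_of_le (by omega) hm, LinearMap.zero_apply]

end String

section Uniqueness

variable {k V : Type*} [Field k] [AddCommGroup V] [Module k V] {H : End k V} {l : ℕ}

theorem pow_apply_basis_of_string (b : Basis (Fin l) k V)
    (hHb : ∀ j : Fin l, H (b j) = if h : (j : ℕ) + 1 < l then b ⟨j + 1, h⟩ else 0) (t : ℕ)
    (j : Fin l) : (H ^ t) (b j) = if h : (j : ℕ) + t < l then b ⟨j + t, h⟩ else 0 := by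
  induction t with
  | zero => simp
  | succ t ih =>
    rw [pow_succ', mul_apply, ih]
    by_cases h : (j : ℕ) + t < l
    · rw [dif_pos h, hHb]
      simp only [← add_assoc]
    · rw [dif_neg h, dif_neg (by omega), map_zero]

theorem pow_pred_apply_eq_repr_smul_of_string (hl : 0 < l) (b : Basis (Fin l) k V)
    (hHb : ∀ j : Fin l, H (b j) = if h : (j : ℕ) + 1 < l then b ⟨j + 1, h⟩ else 0) (x : V) :
    (H ^ (l - 1)) x = b.repr x ⟨0, hl⟩ • b ⟨l - 1, by omega⟩ := by
  conv_lhs => rw [← b.sum_repr x]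
  rw [map_sum, sum_eq_single ⟨0, hl⟩]
  · rw [map_smul, pow_apply_basis_of_string b hHb, dif_pos (by simp; omega)]
    simp
  · intro j _ hj
    rw [map_smul, pow_apply_basis_of_string b hHb, dif_neg, smul_zero]
    have : (j : ℕ) ≠ 0 := fun h ↦ hj (Fin.ext h)
    omega
  · simp

theorem eq_of_string_bases {q : k} {n : ℕ} (hq : IsPrimitiveRoot q n) {G : End k V}
    {l' i i' : ℕ} (hi : i < n) (hi' : i' < n) (hl : 0 < l) (b : Basis (Fin l) k V)
    (b' : Basis (Fin l') k V)
    (hGb : ∀ j : Fin l, G (b j) = q ^ ((i : ℤ) - (j : ℕ)) • b j)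
    (hHb : ∀ j : Fin l, H (b j) = if h : (j : ℕ) + 1 < l then b ⟨j + 1, h⟩ else 0)
    (hGb' : ∀ j : Fin l', G (b' j) = q ^ ((i' : ℤ) - (j : ℕ)) • b' j)
    (hHb' : ∀ j : Fin l', H (b' j) = if h : (j : ℕ) + 1 < l' then b' ⟨j + 1, h⟩ else 0) :
    l = l' ∧ i = i' := by
  obtain rfl : l = l' := by
    simpa using (finrank_eq_card_basis b).symm.trans (finrank_eq_card_basis b')
  refine ⟨rfl, ?_⟩
  have hq0 : q ≠ 0 := hq.ne_zero (by omega)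
  set last : Fin l := ⟨l - 1, by omega⟩
  -- `H ^ (l - 1)` maps onto the line through the last vector of either string.
  have hlast : b' last = b.repr (b' ⟨0, hl⟩) ⟨0, hl⟩ • b last := by
    rw [← pow_pred_apply_eq_repr_smul_of_string hl b hHb, pow_apply_basis_of_string b' hHb',
      dif_pos (by simp; omega)]
    simp [last]
  have hweight : q ^ ((i' : ℤ) - (l - 1 : ℕ)) = q ^ ((i : ℤ) - (l - 1 : ℕ)) := by
    refine smul_left_injective k (b'.ne_zero last) ((hGb' last).symm.trans ?_)
    rw [hlast, map_smul, hGb, smul_comm]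
  rw [zpow_sub₀ hq0, zpow_sub₀ hq0, div_left_inj' (zpow_ne_zero _ hq0), zpow_natCast,
    zpow_natCast] at hweight
  exact hq.pow_inj hi hi' hweight.symm

end Uniqueness

theorem RingQuot.exists_restrictScalars_eq_of_ι_mem_invtSubmodule {R X V : Type*} [CommSemiring R]
    {s : FreeAlgebra R X → FreeAlgebra R X → Prop} [AddCommMonoid V] [Module R V]
    [Module (RingQuot s) V] [IsScalarTower R (RingQuot s) V] {U : Submodule R V}
    (hU : ∀ x : X,
      U ∈ (Algebra.lsmul R R V (mkAlgHom R s (FreeAlgebra.ι R x))).invtSubmodule) :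
    ∃ U' : Submodule (RingQuot s) V, U'.restrictScalars R = U := by
  have hmem : ∀ a : RingQuot s, ∀ v ∈ U, a • v ∈ U := by
    intro a
    obtain ⟨y, rfl⟩ := mkAlgHom_surjective R s a
    induction y using FreeAlgebra.induction with
    | grade0 r => simpa using fun v hv ↦ U.smul_mem r hv
    | grade1 x => exact hU x
    | mul y z hy hz => exact fun v hv ↦ by simpa [mul_smul] using hy _ (hz v hv)
    | add y z hy hz => exact fun v hv ↦ by simpa [add_smul] using U.add_mem (hy v hv) (hz v hv)
  exact ⟨{ U.toAddSubmonoid with smul_mem' := hmem }, rfl⟩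

section Taft

variable {k : Type} [Field k] {q : k} {n : ℕ}

theorem taftG_pow : taftG k q n ^ n = 1 := by
  rw [taftG, ← map_pow, ← map_one (RingQuot.mkAlgHom k (TaftRel k q n))]
  exact RingQuot.mkAlgHom_rel k TaftRel.g_pow

theorem taftH_pow : taftH k q n ^ n = 0 := by
  rw [taftH, ← map_pow, ← map_zero (RingQuot.mkAlgHom k (TaftRel k q n))]
  exact RingQuot.mkAlgHom_rel k TaftRel.h_pow

theorem taftH_mul_taftG : taftH k q n * taftG k q n = q • (taftG k q n * taftH k q n) := by
  rw [taftH, taftG, ← map_mul, ← map_mul, ← map_smul]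
  exact RingQuot.mkAlgHom_rel k TaftRel.h_g

variable {V : Type} [AddCommGroup V] [Module k V] [Module (TaftAlgebra k q n) V]
  [IsScalarTower k (TaftAlgebra k q n) V]

theorem eq_bot_or_eq_bot_of_isCompl_of_mem_invtSubmodule
    (hind : ∀ W U : Submodule (TaftAlgebra k q n) V, IsCompl W U → W = ⊥ ∨ U = ⊥)
    (U W : Submodule k V)
    (hUg : U ∈ (Algebra.lsmul k k V (taftG k q n)).invtSubmodule)
    (hUh : U ∈ (Algebra.lsmul k k V (taftH k q n)).invtSubmodule)
    (hWg : W ∈ (Algebra.lsmul k k V (taftG k q n)).invtSubmodule)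
    (hWh : W ∈ (Algebra.lsmul k k V (taftH k q n)).invtSubmodule) (hUW : IsCompl U W) :
    U = ⊥ ∨ W = ⊥ := by
  obtain ⟨U', rfl⟩ := RingQuot.exists_restrictScalars_eq_of_ι_mem_invtSubmodule
    (s := TaftRel k q n) (U := U) (Bool.rec hUh hUg)
  obtain ⟨W', rfl⟩ := RingQuot.exists_restrictScalars_eq_of_ι_mem_invtSubmodule
    (s := TaftRel k q n) (U := W) (Bool.rec hWh hWg)
  rw [Submodule.isCompl_restrictScalars_iff] at hUW
  simpa only [Submodule.restrictScalars_eq_bot_iff] using hind U' W' hUW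

end Taft

theorem taft_indecomposable_classification_general (k : Type) [Field k] (n : ℕ)
    (q : k) (hq : IsPrimitiveRoot q n)
    (V : Type) [AddCommGroup V] [Module k V] [Module (TaftAlgebra k q n) V]
    [IsScalarTower k (TaftAlgebra k q n) V] [Module.Finite k V]
    (hne : (⊥ : Submodule (TaftAlgebra k q n) V) ≠ ⊤)
    (hind : ∀ W U : Submodule (TaftAlgebra k q n) V, IsCompl W U → W = ⊥ ∨ U = ⊥) :
    -- existence
    (∃ l i : ℕ, 1 ≤ l ∧ l ≤ n ∧ i < n ∧ StdMSpec k q n l (i : ℤ) V) ∧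
    -- uniqueness
    (∀ l l' i i' : ℕ, 1 ≤ l → l ≤ n → i < n → 1 ≤ l' → l' ≤ n → i' < n →
      StdMSpec k q n l (i : ℤ) V → StdMSpec k q n l' (i' : ℤ) V → l = l' ∧ i = i') := by
  refine ⟨?_, ?_⟩
  · have : Nontrivial V := (Submodule.nontrivial_iff (TaftAlgebra k q n)).mp ⟨⟨⊥, ⊤, hne⟩⟩
    obtain ⟨m, d, b, hm, hmn, hd, hGb, hHb⟩ := exists_string_basis_of_indecomposable hq
      (by rw [← map_pow, taftG_pow, map_one]) (by rw [← map_pow, taftH_pow, map_zero])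
      (by rw [← map_mul, ← map_mul, taftH_mul_taftG, map_smul])
      (eq_bot_or_eq_bot_of_isCompl_of_mem_invtSubmodule hind)
    exact ⟨m, d, hm, hmn, hd, b, hGb, hHb⟩
  · rintro l l' i i' hl - hi - - hi' ⟨b, hGb, hHb⟩ ⟨b', hGb', hHb'⟩
    exact eq_of_string_bases hq (G := Algebra.lsmul k k V (taftG k q n))
      (H := Algebra.lsmul k k V (taftH k q n)) hi hi' hl b b' hGb hHb hGb' hHb'

/-- Every finite-dimensional indecomposable `H_n(q)`-module is
isomorphic to `M(l,i)` for a unique pair `(l,i)` with `1 ≤ l ≤ n` and `0 ≤ i ≤ n−1`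
(so up to isomorphism there are exactly `n²` finite-dimensional indecomposables). -/
theorem taft_indecomposable_classification (k : Type) [Field k] (n : ℕ) (hn : 2 ≤ n)
    (q : k) (hq : IsPrimitiveRoot q n)
    (V : Type) [AddCommGroup V] [Module k V] [Module (TaftAlgebra k q n) V]
    [IsScalarTower k (TaftAlgebra k q n) V] [Module.Finite k V]
    (hne : (⊥ : Submodule (TaftAlgebra k q n) V) ≠ ⊤)
    (hind : ∀ W U : Submodule (TaftAlgebra k q n) V, IsCompl W U → W = ⊥ ∨ U = ⊥) :
    -- existence
    (∃ l i : ℕ, 1 ≤ l ∧ l ≤ n ∧ i < n ∧ StdMSpec k q n l (i : ℤ) V) ∧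
    -- uniqueness
    (∀ l l' i i' : ℕ, 1 ≤ l → l ≤ n → i < n → 1 ≤ l' → l' ≤ n → i' < n →
      StdMSpec k q n l (i : ℤ) V → StdMSpec k q n l' (i' : ℤ) V → l = l' ∧ i = i') :=
  taft_indecomposable_classification_general k n q hq V hne hind
end
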